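/- For positive definite d×d matrices Σ₁, Σ₂, the Bures cost Trace(Σ₁ + Σ₂ − 2(Σ₁^{1/2} Σ₂ Σ₁^{1/2})^{1/2}) is nonnegative, and it equals 0 if and only if Σ₁ = Σ₂. -/

import Mathlib

/-! With `A = Σ₁^{1/2}`, `B = Σ₂^{1/2}` and the polar decomposition `B A = U |B A|`, the matrix
`C = Uᴴ B` satisfies `Cᴴ C = Σ₂` and `C A = |B A| = (A Σ₂ A)^{1/2}`. Expanding then shows that the
Bures cost is the squared Frobenius norm `tr ((C - A)ᴴ (C - A))`, which vanishes only for `C = A`,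
and then `Σ₂ = Aᴴ A = Σ₁`. -/

open Matrix

open Classical in
noncomputable def msqrt {d : ℕ} (A : Matrix (Fin d) (Fin d) ℝ) : Matrix (Fin d) (Fin d) ℝ :=
  if h : A.PosSemidef then
    h.1.eigenvectorUnitary.1 * diagonal ((RCLike.ofReal : ℝ → ℝ) ∘ (√·) ∘ h.1.eigenvalues) *
      (star h.1.eigenvectorUnitary : Matrix (Fin d) (Fin d) ℝ)
  else 0

open scoped MatrixOrder ComplexOrder

lemma msqrt_eq_sqrt {d : ℕ} (A : Matrix (Fin d) (Fin d) ℝ) : msqrt A = CFC.sqrt A := by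
  by_cases hA : A.PosSemidef
  · rw [msqrt, dif_pos hA, CFC.sqrt_eq_cfc, cfc_nnreal_eq_real _ A hA.nonneg, hA.1.cfc_eq]
    simp only [IsHermitian.cfc, Unitary.conjStarAlgAut_apply]
    congr 3
    funext i
    simp [Real.coe_sqrt, Real.coe_toNNReal', max_eq_left (hA.eigenvalues_nonneg i)]
  · rw [msqrt, dif_neg hA, CFC.sqrt_of_not_nonneg (nonneg_iff_posSemidef.not.mpr hA)]

section CFC

variable {A : Type*} [PartialOrder A] [NonUnitalRing A] [TopologicalSpace A] [StarRing A]
  [Module ℝ A] [SMulCommClass ℝ A A] [IsScalarTower ℝ A A] [StarOrderedRing A]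
  [NonUnitalContinuousFunctionalCalculus ℝ A IsSelfAdjoint] [NonnegSpectrumClass ℝ A]
  [IsSemitopologicalRing A] [T2Space A]

lemma CFC.sqrt_sqrt_mul_mul_sqrt_self (a : A) (ha : 0 ≤ a := by cfc_tac) :
    CFC.sqrt (CFC.sqrt a * a * CFC.sqrt a) = a := by
  conv_lhs => enter [1, 1, 2]; rw [← CFC.sqrt_mul_sqrt_self a]
  rw [← mul_assoc, mul_assoc, CFC.sqrt_mul_sqrt_self a, CFC.sqrt_mul_self a]

end CFC

namespace Matrix

lemma trace_conjTranspose_sub_mul_sub {R n : Type*} [CommRing R] [StarRing R] [Fintype n]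
    {A C : Matrix n n R} (hA : A.IsHermitian) (hCA : (C * A).IsHermitian) :
    ((C - A)ᴴ * (C - A)).trace = (Cᴴ * C).trace + (A * A).trace - 2 * (C * A).trace := by
  have hCtA : (Cᴴ * A).trace = (C * A).trace := by
    rw [← hCA.eq, conjTranspose_mul, hA.eq, trace_mul_comm]
  rw [conjTranspose_sub, hA.eq, sub_mul, mul_sub, mul_sub, trace_sub, trace_sub, trace_sub, hCtA,
    trace_mul_comm A C]
  ring

variable {𝕜 n : Type*} [RCLike 𝕜] [Fintype n] [DecidableEq n]

lemma exists_mem_unitaryGroup_mul_abs_eq {M : Matrix n n 𝕜} (hM : IsUnit M) :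
    ∃ U ∈ unitaryGroup n 𝕜, U * CFC.abs M = M := by
  set P := CFC.abs M
  have hPP : P * P = Mᴴ * M := CFC.abs_mul_abs M
  have hPh : Pᴴ = P := (CFC.abs_nonneg M).posSemidef.1
  have hP : IsUnit P.det := by
    have : IsUnit (P * P) := hPP ▸ hM.star.mul hM
    rw [isUnit_iff_isUnit_det, det_mul] at this
    exact isUnit_of_mul_isUnit_left this
  refine ⟨M * P⁻¹, mem_unitaryGroup_iff'.mpr ?_, by rw [mul_assoc, nonsing_inv_mul _ hP, mul_one]⟩
  calc star (M * P⁻¹) * (M * P⁻¹) = P⁻¹ * (Mᴴ * M) * P⁻¹ := by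
        rw [star_eq_conjTranspose, conjTranspose_mul, conjTranspose_nonsing_inv, hPh, mul_assoc,
          mul_assoc, mul_assoc]
    _ = 1 := by rw [← hPP, ← mul_assoc, nonsing_inv_mul _ hP, one_mul, mul_nonsing_inv _ hP]

lemma PosDef.exists_conjTranspose_mul_self_eq_and_mul_sqrt_eq {S₁ S₂ : Matrix n n 𝕜}
    (hS₁ : S₁.PosDef) (hS₂ : S₂.PosDef) :
    ∃ C : Matrix n n 𝕜, Cᴴ * C = S₂ ∧
      C * CFC.sqrt S₁ = CFC.sqrt (CFC.sqrt S₁ * S₂ * CFC.sqrt S₁) := by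
  set A := CFC.sqrt S₁
  set B := CFC.sqrt S₂
  have hA : Aᴴ = A := (CFC.sqrt_nonneg S₁).posSemidef.1
  have hB : Bᴴ = B := (CFC.sqrt_nonneg S₂).posSemidef.1
  have hBB : B * B = S₂ := CFC.sqrt_mul_sqrt_self S₂ hS₂.posSemidef.nonneg
  have hM : IsUnit (B * A) :=
    ((CFC.isUnit_sqrt_iff S₂ hS₂.posSemidef.nonneg).mpr hS₂.isUnit).mul
      ((CFC.isUnit_sqrt_iff S₁ hS₁.posSemidef.nonneg).mpr hS₁.isUnit)
  have habs : CFC.abs (B * A) = CFC.sqrt (A * S₂ * A) := by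
    rw [CFC.abs, star_eq_conjTranspose, conjTranspose_mul, hA, hB, ← hBB]
    simp only [mul_assoc]
  obtain ⟨U, hU, hUM⟩ := exists_mem_unitaryGroup_mul_abs_eq hM
  refine ⟨Uᴴ * B, ?_, ?_⟩
  · rw [conjTranspose_mul, conjTranspose_conjTranspose, hB, mul_assoc, ← mul_assoc U,
      ← star_eq_conjTranspose, mem_unitaryGroup_iff.mp hU, one_mul, hBB]
  · rw [← habs, mul_assoc]
    conv_lhs => rw [← hUM]
    rw [← mul_assoc, ← star_eq_conjTranspose, mem_unitaryGroup_iff'.mp hU, one_mul]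

end Matrix

/-- The Bures cost is nonnegative and vanishes iff `Σ₁ = Σ₂`. -/
theorem bures_cost_nonneg_eq_zero_iff {d : ℕ}
    (S₁ S₂ : Matrix (Fin d) (Fin d) ℝ)
    (hS₁ : S₁.PosDef) (hS₂ : S₂.PosDef) :
    0 ≤ (S₁ + S₂ - (2 : ℝ) • msqrt (msqrt S₁ * S₂ * msqrt S₁)).trace ∧
      ((S₁ + S₂ - (2 : ℝ) • msqrt (msqrt S₁ * S₂ * msqrt S₁)).trace = 0 ↔ S₁ = S₂) := by
  simp only [msqrt_eq_sqrt]
  obtain ⟨C, hCC, hCA⟩ := hS₁.exists_conjTranspose_mul_self_eq_and_mul_sqrt_eq hS₂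
  set A := CFC.sqrt S₁
  have hA : A.IsHermitian := (CFC.sqrt_nonneg S₁).posSemidef.1
  have hAA : A * A = S₁ := CFC.sqrt_mul_sqrt_self S₁ hS₁.posSemidef.nonneg
  have hfrob : (S₁ + S₂ - (2 : ℝ) • CFC.sqrt (A * S₂ * A)).trace = ((C - A)ᴴ * (C - A)).trace := by
    rw [trace_conjTranspose_sub_mul_sub hA (hCA ▸ (CFC.sqrt_nonneg _).posSemidef.1), hCC, hAA, hCA,
      trace_sub, trace_add, trace_smul, smul_eq_mul]
    ring
  refine ⟨hfrob ▸ (posSemidef_conjTranspose_mul_self _).trace_nonneg, fun h => ?_, fun h => ?_⟩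
  · rw [hfrob, trace_conjTranspose_mul_self_eq_zero_iff, sub_eq_zero] at h
    rw [← hCC, h, hA.eq, hAA]
  · subst h
    rw [CFC.sqrt_sqrt_mul_mul_sqrt_self S₁ hS₁.posSemidef.nonneg, two_smul, sub_self,
      trace_zero]
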